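/- Let ρ and v be smooth fields satisfying the mass-type balance D_t ρ + ρ ∇·v = -∇·j̄ for some flux j̄, and the momentum balance D_t(ρv) + ρv ∇·v = ∇·T. Then the kinetic energy density satisfies D_t(½ρ|v|²) = ∇·((Tᵀ + (v⊗j̄)ᵀ)v - ½|v|² j̄) - (T + v⊗j̄) : ∇v - ½ρ|v|² ∇·v. -/

import Mathlib

/-- Partial derivative in the `i`-th coordinate direction. -/
noncomputable def pd (n : ℕ) (i : Fin n) (f : (Fin n → ℝ) → ℝ) (x : Fin n → ℝ) : ℝ :=
  fderiv ℝ f x (Pi.single i 1)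

/-- Material derivative `D_t f = ∂_t f + v·∇f` of a scalar field. -/
noncomputable def matD (n : ℕ) (v : ℝ → (Fin n → ℝ) → (Fin n → ℝ))
    (f : ℝ → (Fin n → ℝ) → ℝ) (t : ℝ) (x : Fin n → ℝ) : ℝ :=
  deriv (fun s => f s x) t + ∑ j, v t x j * pd n j (f t) x

/-- Spatial divergence of a (time-dependent) vector field. -/
noncomputable def divg (n : ℕ) (w : ℝ → (Fin n → ℝ) → (Fin n → ℝ))
    (t : ℝ) (x : Fin n → ℝ) : ℝ :=
  ∑ j, pd n j (fun y => w t y j) x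

section helpers
variable {n : ℕ} {f g : (Fin n → ℝ) → ℝ} {x : Fin n → ℝ} {i : Fin n}

lemma pd_add (hf : DifferentiableAt ℝ f x) (hg : DifferentiableAt ℝ g x) :
    pd n i (fun y => f y + g y) x = pd n i f x + pd n i g x := by
  simp [pd, fderiv_fun_add hf hg]

lemma pd_sub (hf : DifferentiableAt ℝ f x) (hg : DifferentiableAt ℝ g x) :
    pd n i (fun y => f y - g y) x = pd n i f x - pd n i g x := by
  simp [pd, fderiv_fun_sub hf hg]

lemma pd_mul (hf : DifferentiableAt ℝ f x) (hg : DifferentiableAt ℝ g x) :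
    pd n i (fun y => f y * g y) x = f x * pd n i g x + g x * pd n i f x := by
  simp [pd, fderiv_fun_mul hf hg]

lemma pd_const_mul (hf : DifferentiableAt ℝ f x) (c : ℝ) :
    pd n i (fun y => c * f y) x = c * pd n i f x := by
  simp [pd, fderiv_const_mul hf c]

lemma pd_sum {ι : Type*} {s : Finset ι} {F : ι → (Fin n → ℝ) → ℝ}
    (h : ∀ j ∈ s, DifferentiableAt ℝ (F j) x) :
    pd n i (fun y => ∑ j ∈ s, F j y) x = ∑ j ∈ s, pd n i (F j) x := by
  simp [pd, fderiv_fun_sum h]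

lemma pd_pow2 (hf : DifferentiableAt ℝ f x) :
    pd n i (fun y => f y ^ 2) x = 2 * f x * pd n i f x := by
  simp only [pow_two]
  rw [pd_mul hf hf]; ring

end helpers

lemma key (n : ℕ) (a r : ℝ) (w u c e : Fin n → ℝ) (b : Fin n → ℝ) (S d g : Fin n → Fin n → ℝ)
    (hmass : a + ∑ j, w j * b j + r * ∑ j, d j j = -∑ j, e j)
    (hmom : ∀ i, a * w i + r * c i + ∑ j, w j * (r * d i j + w i * b j)
        + r * w i * ∑ j, d j j = ∑ j, g i j) :
    1/2 * a * (∑ k, w k ^ 2) + 1/2 * r * (∑ k, 2 * w k * c k)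
      + ∑ j, w j * (1/2 * r * (∑ k, 2 * w k * d k j) + (∑ k, w k ^ 2) * (1/2 * b j))
    = (∑ i, ((∑ j, ((S j i + w j * u i) * d j i + w j * (g j i + (w j * e i + u i * d j i))))
        - ((1/2 * ∑ k, w k ^ 2) * e i + u i * (1/2 * ∑ k, 2 * w k * d k i))))
      - (∑ i, ∑ j, (S i j + w i * u j) * d i j)
      - (1/2 * r * ∑ k, w k ^ 2) * (∑ j, d j j) := by
  have sumext : ∀ (f g : Fin n → ℝ), (∀ i, f i = g i) →
      ∑ i, f i = ∑ i, g i := fun f g h => Finset.sum_congr rfl fun i _ => h i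
  have q1 : ∑ k, 2 * w k * c k = 2 * ∑ k, w k * c k := by
    rw [Finset.mul_sum]; exact sumext _ _ fun k => by ring
  have q2 : ∀ j, ∑ k, 2 * w k * d k j = 2 * ∑ k, w k * d k j := fun j => by
    rw [Finset.mul_sum]; exact sumext _ _ fun k => by ring
  have pcomm : ∑ j, w j * ∑ k, w k * d k j = ∑ i, w i * ∑ j, w j * d i j := by
    simp only [Finset.mul_sum]
    rw [Finset.sum_comm]
    exact sumext _ _ fun i => sumext _ _ fun j => by ring
  have E1 : 1/2 * a * (∑ k, w k ^ 2) + 1/2 * r * (∑ k, 2 * w k * c k)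
      + ∑ j, w j * (1/2 * r * (∑ k, 2 * w k * d k j) + (∑ k, w k ^ 2) * (1/2 * b j))
      = 1/2 * a * (∑ k, w k ^ 2) + r * (∑ k, w k * c k)
        + (r * (∑ i, w i * ∑ j, w j * d i j)
            + 1/2 * (∑ k, w k ^ 2) * (∑ j, w j * b j)) := by
    have t1 : ∀ j, w j * (1/2 * r * (∑ k, 2 * w k * d k j) + (∑ k, w k ^ 2) * (1/2 * b j))
        = r * (w j * ∑ k, w k * d k j) + 1/2 * (∑ k, w k ^ 2) * (w j * b j) := by
      intro j; rw [q2 j]; ring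
    rw [q1]
    simp only [t1, Finset.sum_add_distrib, ← Finset.mul_sum]
    rw [pcomm]; ring
  have E2 : ∑ i, w i * (a * w i + r * c i + ∑ j, w j * (r * d i j + w i * b j)
        + r * w i * ∑ j, d j j)
      = a * (∑ k, w k ^ 2) + r * (∑ k, w k * c k)
        + (r * (∑ i, w i * ∑ j, w j * d i j)
            + (∑ k, w k ^ 2) * (∑ j, w j * b j))
        + r * (∑ k, w k ^ 2) * (∑ j, d j j) := by
    have inner : ∀ i, ∑ j, w j * (r * d i j + w i * b j)
        = r * (∑ j, w j * d i j) + w i * (∑ j, w j * b j) := by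
      intro i
      rw [Finset.mul_sum, Finset.mul_sum, ← Finset.sum_add_distrib]
      exact sumext _ _ fun j => by ring
    have t2 : ∀ i, w i * (a * w i + r * c i + ∑ j, w j * (r * d i j + w i * b j)
          + r * w i * ∑ j, d j j)
        = a * w i ^ 2 + r * (w i * c i) + (r * (w i * ∑ j, w j * d i j)
            + w i ^ 2 * (∑ j, w j * b j)) + (r * w i ^ 2) * (∑ j, d j j) := by
      intro i; rw [inner i]; ring
    simp only [t2, Finset.sum_add_distrib, ← Finset.mul_sum, ← Finset.sum_mul]
  have hG : ∑ i, w i * (a * w i + r * c i + ∑ j, w j * (r * d i j + w i * b j)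
        + r * w i * ∑ j, d j j) = ∑ i, w i * ∑ j, g i j :=
    sumext _ _ fun i => by rw [hmom i]
  have ER : (∑ i, ((∑ j, ((S j i + w j * u i) * d j i + w j * (g j i + (w j * e i + u i * d j i))))
        - ((1/2 * ∑ k, w k ^ 2) * e i + u i * (1/2 * ∑ k, 2 * w k * d k i))))
      - (∑ i, ∑ j, (S i j + w i * u j) * d i j)
      - (1/2 * r * ∑ k, w k ^ 2) * (∑ j, d j j)
      = (∑ i, w i * ∑ j, g i j) + 1/2 * (∑ k, w k ^ 2) * (∑ j, e j)
        - 1/2 * r * (∑ k, w k ^ 2) * (∑ j, d j j) := by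
    have p3 : ∀ i, (∑ j, ((S j i + w j * u i) * d j i + w j * (g j i + (w j * e i + u i * d j i))))
        = (∑ j, S j i * d j i) + (∑ j, w j * (u i * d j i)) + (∑ j, w j * g j i)
          + (∑ j, w j ^ 2) * e i + (∑ j, w j * (u i * d j i)) := by
      intro i
      rw [Finset.sum_mul, ← Finset.sum_add_distrib, ← Finset.sum_add_distrib,
        ← Finset.sum_add_distrib, ← Finset.sum_add_distrib]
      exact sumext _ _ fun j => by ring
    have p4 : ∀ i, (1/2 * ∑ k, w k ^ 2) * e i + u i * (1/2 * ∑ k, 2 * w k * d k i)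
        = (1/2 * ∑ k, w k ^ 2) * e i + u i * (∑ k, w k * d k i) := by
      intro i; rw [q2 i]; ring
    simp only [p3, p4, Finset.sum_add_distrib, Finset.sum_sub_distrib]
    have c1 : ∑ i : Fin n, ∑ j : Fin n, S j i * d j i
        = ∑ i : Fin n, ∑ j : Fin n, S i j * d i j := Finset.sum_comm
    have c2 : ∑ i : Fin n, ∑ j : Fin n, w j * (u i * d j i)
        = ∑ i : Fin n, ∑ j : Fin n, w i * u j * d i j := by
      rw [Finset.sum_comm]
      exact sumext _ _ fun i => sumext _ _ fun j => by ring
    have c3 : ∑ i : Fin n, ∑ j : Fin n, w j * g j i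
        = ∑ i, w i * ∑ j, g i j := by
      rw [Finset.sum_comm]
      exact sumext _ _ fun i => (Finset.mul_sum _ _ _).symm
    have c4 : ∑ i : Fin n, (∑ j, w j ^ 2) * e i
        = (∑ k, w k ^ 2) * ∑ i, e i := (Finset.mul_sum _ _ _).symm
    have c5 : ∑ i : Fin n, u i * (∑ k, w k * d k i)
        = ∑ i : Fin n, ∑ j : Fin n, w j * (u i * d j i) :=
      sumext _ _ fun i => by rw [Finset.mul_sum]; exact sumext _ _ fun k => by ring
    have c6 : ∑ i : Fin n, ∑ j : Fin n, (S i j + w i * u j) * d i j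
        = (∑ i : Fin n, ∑ j : Fin n, S i j * d i j)
          + ∑ i : Fin n, ∑ j : Fin n, w i * u j * d i j := by
      simp only [← Finset.sum_add_distrib]
      exact sumext _ _ fun i => sumext _ _ fun j => by ring
    have c7 : ∑ i : Fin n, (1/2 * ∑ k, w k ^ 2) * e i
        = (1/2 * ∑ k, w k ^ 2) * ∑ i, e i := (Finset.mul_sum _ _ _).symm
    linear_combination c1 + c2 + c3 + c4 - c5 - c6 - c7
  linear_combination E1 - ER + hG - E2 - (∑ k, w k ^ 2)/2 * hmass

/-- Kinetic-energy identity. -/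
theorem kinetic_energy_identity (n : ℕ)
    (ρ : ℝ → (Fin n → ℝ) → ℝ)
    (v jbar : ℝ → (Fin n → ℝ) → (Fin n → ℝ))
    (T : ℝ → (Fin n → ℝ) → Matrix (Fin n) (Fin n) ℝ)
    (hρ : ContDiff ℝ (⊤ : ℕ∞) (fun p : ℝ × (Fin n → ℝ) => ρ p.1 p.2))
    (hv : ∀ i, ContDiff ℝ (⊤ : ℕ∞) (fun p : ℝ × (Fin n → ℝ) => v p.1 p.2 i))
    (hj : ∀ i, ContDiff ℝ (⊤ : ℕ∞) (fun p : ℝ × (Fin n → ℝ) => jbar p.1 p.2 i))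
    (hT : ∀ i j, ContDiff ℝ (⊤ : ℕ∞) (fun p : ℝ × (Fin n → ℝ) => T p.1 p.2 i j))
    (hmass : ∀ t x, matD n v ρ t x + ρ t x * divg n v t x = - divg n jbar t x)
    (hmom : ∀ t x i,
      matD n v (fun s y => ρ s y * v s y i) t x + ρ t x * v t x i * divg n v t x
        = ∑ j, pd n j (fun y => T t y i j) x) :
    ∀ t x,
      matD n v (fun s y => (1 / 2) * ρ s y * ∑ k, v s y k ^ 2) t x
        = divg n (fun s y i =>
              (∑ j, (T s y j i + v s y j * jbar s y i) * v s y j)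
                - (1 / 2) * (∑ k, v s y k ^ 2) * jbar s y i) t x
          - (∑ i, ∑ j, (T t x i j + v t x i * jbar t x j) * pd n j (fun y => v t y i) x)
          - (1 / 2) * ρ t x * (∑ k, v t x k ^ 2) * divg n v t x := by
  intro t x
  have dx : ∀ (F : ℝ × (Fin n → ℝ) → ℝ), ContDiff ℝ (⊤ : ℕ∞) F →
      DifferentiableAt ℝ (fun y => F (t, y)) x := fun F hF =>
    ((hF.differentiable (by simp)).comp
      ((differentiable_const t).prodMk differentiable_id)).differentiableAt
  have dt : ∀ (F : ℝ × (Fin n → ℝ) → ℝ), ContDiff ℝ (⊤ : ℕ∞) F →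
      DifferentiableAt ℝ (fun s => F (s, x)) t := fun F hF =>
    ((hF.differentiable (by simp)).comp
      (differentiable_id.prodMk (differentiable_const x))).differentiableAt
  have hxρ : DifferentiableAt ℝ (fun y => ρ t y) x := dx _ hρ
  have hxv : ∀ i, DifferentiableAt ℝ (fun y => v t y i) x := fun i => dx _ (hv i)
  have hxj : ∀ i, DifferentiableAt ℝ (fun y => jbar t y i) x := fun i => dx _ (hj i)
  have hxT : ∀ i j, DifferentiableAt ℝ (fun y => T t y i j) x := fun i j => dx _ (hT i j)
  have htρ : DifferentiableAt ℝ (fun s => ρ s x) t := dt _ hρ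
  have htv : ∀ i, DifferentiableAt ℝ (fun s => v s x i) t := fun i => dt _ (hv i)
  have hsumv : DifferentiableAt ℝ (fun y => ∑ k, v t y k ^ 2) x :=
    DifferentiableAt.fun_sum fun k _ => (hxv k).pow 2
  have hKt : deriv (fun s => 1 / 2 * ρ s x * ∑ k, v s x k ^ 2) t
      = 1 / 2 * deriv (fun s => ρ s x) t * (∑ k, v t x k ^ 2)
        + 1 / 2 * ρ t x * ∑ k, 2 * v t x k * deriv (fun s => v s x k) t := by
    have h1 : HasDerivAt (fun s => ∑ k, v s x k ^ 2)
        (∑ k, 2 * v t x k * deriv (fun s => v s x k) t) t :=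
      HasDerivAt.fun_sum fun k _ => by simpa using ((htv k).hasDerivAt.fun_pow 2)
    have h2 := ((htρ.hasDerivAt.const_mul (1 / 2)).fun_mul h1).deriv
    rw [h2]
  have hKx : ∀ j, pd n j (fun y => 1 / 2 * ρ t y * ∑ k, v t y k ^ 2) x
      = 1 / 2 * ρ t x * (∑ k, 2 * v t x k * pd n j (fun y => v t y k) x)
        + (∑ k, v t x k ^ 2) * (1 / 2 * pd n j (fun y => ρ t y) x) := by
    intro j
    have e1 : (fun y => 1 / 2 * ρ t y * ∑ k, v t y k ^ 2)
        = fun y => (fun z => 1 / 2 * ρ t z) y * (fun z => ∑ k, v t z k ^ 2) y := rfl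
    rw [e1, pd_mul (hxρ.const_mul (1/2)) hsumv, pd_const_mul hxρ,
      pd_sum (fun k _ => (hxv k).fun_pow 2)]
    congr 2
    refine Finset.sum_congr rfl fun k _ => pd_pow2 (hxv k)
  have Hlhs : matD n v (fun s y => (1 / 2) * ρ s y * ∑ k, v s y k ^ 2) t x
      = 1 / 2 * deriv (fun s => ρ s x) t * (∑ k, v t x k ^ 2)
        + 1 / 2 * ρ t x * (∑ k, 2 * v t x k * deriv (fun s => v s x k) t)
        + ∑ j, v t x j *
            (1 / 2 * ρ t x * (∑ k, 2 * v t x k * pd n j (fun y => v t y k) x)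
              + (∑ k, v t x k ^ 2) * (1 / 2 * pd n j (fun y => ρ t y) x)) := by
    simp only [matD, hKt, hKx]
  have Hdiv : divg n (fun s y i =>
        (∑ j, (T s y j i + v s y j * jbar s y i) * v s y j)
          - (1 / 2) * (∑ k, v s y k ^ 2) * jbar s y i) t x
      = ∑ i, ((∑ j, ((T t x j i + v t x j * jbar t x i) * pd n i (fun y => v t y j) x
              + v t x j * (pd n i (fun y => T t y j i) x
                  + (v t x j * pd n i (fun y => jbar t y i) x
                    + jbar t x i * pd n i (fun y => v t y j) x))))
          - (1 / 2 * (∑ k, v t x k ^ 2) * pd n i (fun y => jbar t y i) x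
              + jbar t x i * (1 / 2 * ∑ k, 2 * v t x k * pd n i (fun y => v t y k) x))) := by
    simp only [divg]
    refine Finset.sum_congr rfl fun i _ => ?_
    have dterm : ∀ j : Fin n, DifferentiableAt ℝ
        (fun y => (T t y j i + v t y j * jbar t y i) * v t y j) x :=
      fun j => (((hxT j i).add ((hxv j).mul (hxj i))).mul (hxv j))
    have dsum1 : DifferentiableAt ℝ
        (fun y => ∑ j, (T t y j i + v t y j * jbar t y i) * v t y j) x :=
      DifferentiableAt.fun_sum fun j _ => dterm j
    have dsum2 : DifferentiableAt ℝ
        (fun y => 1 / 2 * (∑ k, v t y k ^ 2) * jbar t y i) x :=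
      (hsumv.const_mul (1/2)).mul (hxj i)
    have e0 : (fun y => (∑ j, (T t y j i + v t y j * jbar t y i) * v t y j)
          - (1 / 2) * (∑ k, v t y k ^ 2) * jbar t y i)
        = fun y => (fun z => ∑ j, (T t z j i + v t z j * jbar t z i) * v t z j) y
            - (fun z => 1 / 2 * (∑ k, v t z k ^ 2) * jbar t z i) y := rfl
    rw [e0, pd_sub dsum1 dsum2, pd_sum (fun j _ => dterm j)]
    have e2 : (fun z => 1 / 2 * (∑ k, v t z k ^ 2) * jbar t z i)
        = fun z => (fun y => 1 / 2 * (∑ k, v t y k ^ 2)) z * (fun y => jbar t y i) z := rfl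
    rw [e2, pd_mul (hsumv.const_mul (1/2)) (hxj i), pd_const_mul hsumv,
      pd_sum (fun k _ => (hxv k).fun_pow 2)]
    have e3 : ∑ k, pd n i (fun y => v t y k ^ 2) x
        = ∑ k, 2 * v t x k * pd n i (fun y => v t y k) x :=
      Finset.sum_congr rfl fun k _ => pd_pow2 (hxv k)
    rw [e3]
    congr 1
    refine Finset.sum_congr rfl fun j _ => ?_
    have e4 : (fun y => (T t y j i + v t y j * jbar t y i) * v t y j)
        = fun y => (fun z => T t z j i + v t z j * jbar t z i) y * (fun z => v t z j) y := rfl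
    rw [e4, pd_mul ((hxT j i).fun_add ((hxv j).fun_mul (hxj i))) (hxv j)]
    have e5 : (fun z => T t z j i + v t z j * jbar t z i)
        = fun z => (fun y => T t y j i) z + (fun y => v t y j * jbar t y i) z := rfl
    rw [e5, pd_add (hxT j i) ((hxv j).fun_mul (hxj i))]
    have e6 : (fun y => v t y j * jbar t y i)
        = fun y => (fun z => v t z j) y * (fun z => jbar t z i) y := rfl
    rw [e6, pd_mul (hxv j) (hxj i)]
  have Hmom : ∀ i, deriv (fun s => ρ s x) t * v t x i + ρ t x * deriv (fun s => v s x i) t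
      + (∑ j, v t x j * (ρ t x * pd n j (fun y => v t y i) x
          + v t x i * pd n j (fun y => ρ t y) x))
      + ρ t x * v t x i * (∑ j, pd n j (fun y => v t y j) x)
      = ∑ j, pd n j (fun y => T t y i j) x := by
    intro i
    have h0 := hmom t x i
    simp only [matD, divg] at h0
    rw [(htρ.hasDerivAt.fun_mul (htv i).hasDerivAt).deriv] at h0
    have e7 : ∀ j : Fin n, pd n j (fun y => ρ t y * v t y i) x
        = ρ t x * pd n j (fun y => v t y i) x + v t x i * pd n j (fun y => ρ t y) x :=
      fun j => pd_mul hxρ (hxv i)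
    simp only [e7] at h0
    exact h0
  have Hmass : deriv (fun s => ρ s x) t + (∑ j, v t x j * pd n j (fun y => ρ t y) x)
      + ρ t x * (∑ j, pd n j (fun y => v t y j) x)
      = - ∑ j, pd n j (fun y => jbar t y j) x := by
    have h0 := hmass t x
    simp only [matD, divg] at h0
    exact h0
  rw [Hlhs, Hdiv]
  simp only [divg]
  exact key n (deriv (fun s => ρ s x) t) (ρ t x) (fun i => v t x i) (fun i => jbar t x i)
    (fun i => deriv (fun s => v s x i) t) (fun i => pd n i (fun y => jbar t y i) x)
    (fun j => pd n j (fun y => ρ t y) x) (fun i j => T t x i j)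
    (fun i j => pd n j (fun y => v t y i) x) (fun p q => pd n q (fun y => T t y p q) x)
    Hmass Hmom
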